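/- Every non-recursive context-free game has the bounded depth property, and consequently has a weakly dominant one-pass strategy (and hence an undominated one-pass strategy). -/

import Mathlib

namespace CFG

/-- Juliet's two kinds of moves. -/
inductive JMove : Type
  | call : JMove
  | read : JMove
deriving DecidableEq

/-- The extended alphabet Σ̂: `Sum.inl a` is the plain symbol `a`,
`Sum.inr a` is the "called" copy `â`. -/
abbrev HSym (A : Type) : Type := A ⊕ A

/-- The homomorphism ♮ deleting called symbols. -/
def flat {A : Type} (α : List (HSym A)) : List A :=
  α.filterMap (fun x => match x with | Sum.inl a => some a | Sum.inr _ => none)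

/-- A context-free game: a (minimal) DFA `T` over `A` with finite state set `Q`,
and a replacement relation `R` with nonempty replacement words and regular
replacement languages. -/
structure CFGame (A : Type) where
  Q : Type
  fintypeQ : Fintype Q
  T : DFA A Q
  minimal_reachable : ∀ q : Q, ∃ w : List A, T.evalFrom T.start w = q
  minimal_distinguishable :
    ∀ q q' : Q, (∀ w : List A, T.evalFrom q w ∈ T.accept ↔ T.evalFrom q' w ∈ T.accept) → q = q'
  R : A → List A → Prop
  R_ne : ∀ a v, R a v → v ≠ []
  R_regular : ∀ a, Language.IsRegular {v : List A | R a v}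

variable {A : Type}

/-- `a` is a function symbol (its replacement language is nonempty). -/
def CFGame.Fn (G : CFGame A) (a : A) : Prop := ∃ v, G.R a v

/-- One-pass strategies of Juliet (values at non-function symbols are irrelevant). -/
abbrev JStrat (A : Type) : Type := List (HSym A) → A → JMove

/-- Strategies of Romeo (values at non-function symbols are irrelevant). -/
abbrev RStrat (A : Type) : Type := List (HSym A) → A → List A

/-- Validity of a Romeo strategy: replacement words belong to the replacement language. -/
def CFGame.RValid (G : CFGame A) (τ : RStrat A) : Prop :=
  ∀ (α : List (HSym A)) (a : A), G.Fn a → G.R a (τ α a)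

/-- Configurations, instrumented for depth bookkeeping: a history string, the
remaining string where every symbol is annotated with its call-nesting level,
and the maximal nesting depth of the `Call` moves played so far. -/
abbrev Config (A : Type) : Type := List (HSym A) × List (A × ℕ) × ℕ

/-- One step of a play: Juliet reads or calls the current symbol according to `σ`
(a call is only possible at a function symbol); a call is answered by `τ`. -/
noncomputable def CFGame.step (G : CFGame A) (σ : JStrat A) (τ : RStrat A) :
    Config A → Config A :=
  fun c =>
    match c with
    | (α, [], d) => (α, [], d)
    | (α, (a, k) :: v, d) =>
      letI := Classical.propDecidable (G.Fn a ∧ σ α a = JMove.call)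
      if G.Fn a ∧ σ α a = JMove.call then
        (α ++ [Sum.inr a], (τ α a).map (fun b => (b, k + 1)) ++ v, max d (k + 1))
      else (α ++ [Sum.inl a], v, d)

/-- The play of `σ` against `τ` on input word `w`, as the sequence of its
configurations (the configuration stays fixed once the remaining string is empty). -/
noncomputable def CFGame.play (G : CFGame A) (σ : JStrat A) (τ : RStrat A)
    (w : List A) (n : ℕ) : Config A :=
  (G.step σ τ)^[n] ([], w.map (fun a => (a, 0)), 0)

/-- `σ` wins on `w`: against every (valid) Romeo strategy, the play on `w` is
finite and its final string belongs to the target language. -/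
def CFGame.WinsOn (G : CFGame A) (σ : JStrat A) (w : List A) : Prop :=
  ∀ τ : RStrat A, G.RValid τ →
    ∃ n : ℕ, (G.play σ τ w n).2.1 = [] ∧
      G.T.evalFrom G.T.start (flat (G.play σ τ w n).1) ∈ G.T.accept

/-- The winning set `W(σ)`. -/
def CFGame.W (G : CFGame A) (σ : JStrat A) : Set (List A) := {w | G.WinsOn σ w}

/-- `σ` is terminating: every play of `σ` is finite. -/
def CFGame.Terminating (G : CFGame A) (σ : JStrat A) : Prop :=
  ∀ τ : RStrat A, G.RValid τ → ∀ w : List A, ∃ n : ℕ, (G.play σ τ w n).2.1 = []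

/-- `σ` is dominant: it dominates every one-pass strategy. -/
def CFGame.Dominant (G : CFGame A) (σ : JStrat A) : Prop :=
  ∀ σ' : JStrat A, G.W σ' ⊆ G.W σ

/-- `σ` is undominated: no one-pass strategy strictly dominates it. -/
def CFGame.Undominated (G : CFGame A) (σ : JStrat A) : Prop :=
  ¬ ∃ σ' : JStrat A, G.W σ ⊂ G.W σ'

/-- `σ` is forgetful: its decisions only depend on `♮α` and the current symbol. -/
def CFGame.Forgetful (G : CFGame A) (σ : JStrat A) : Prop :=
  ∀ (α β : List (HSym A)) (a : A), G.Fn a → flat α = flat β → σ α a = σ β a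

/-- `σ` is regular: the language `{αa : σ(α,a) = Call}` over Σ̂ is regular. -/
def CFGame.RegularStrat (G : CFGame A) (σ : JStrat A) : Prop :=
  Language.IsRegular
    {x : List (HSym A) | ∃ (α : List (HSym A)) (a : A),
      G.Fn a ∧ σ α a = JMove.call ∧ x = α ++ [Sum.inl a]}

/-- One step of a strategy automaton of a strongly regular strategy, on the state
set `Q ∪ {Call}` (`none` is the absorbing state `Call`). -/
def optStep {Q : Type} (δA : Q → A → Option Q) (o : Option Q) (a : A) : Option Q :=
  o.bind (fun q => δA q a)

/-- `σ` is strongly regular: given by an automaton obtained from `T` by rerouting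
some transitions to a new accepting state `Call`; Juliet plays `Call` on `(α,a)`
iff the automaton maps `♮α·a` to `Call`. -/
def CFGame.StronglyRegular (G : CFGame A) (σ : JStrat A) : Prop :=
  ∃ δA : G.Q → A → Option G.Q,
    (∀ q a, δA q a = some (G.T.step q a) ∨ δA q a = none) ∧
    ∀ (α : List (HSym A)) (a : A), G.Fn a →
      (σ α a = JMove.call ↔
        List.foldl (optStep δA) (some G.T.start) (flat α ++ [a]) = none)

/-- Shortlex (strict) order on words. -/
def shortLex [LinearOrder A] (v w : List A) : Prop :=
  v.length < w.length ∨ (v.length = w.length ∧ List.Lex (· < ·) v w)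

/-- `V <_sl W` for sets of words: the shortlex-least word of the symmetric
difference belongs to `W`. -/
def slLT [LinearOrder A] (V W : Set (List A)) : Prop :=
  ∃ w : List A, w ∈ W ∧ w ∉ V ∧ ∀ v : List A, shortLex v w → (v ∈ V ↔ v ∈ W)

/-- `V ≤_sl W` for sets of words. -/
def slLE [LinearOrder A] (V W : Set (List A)) : Prop := V = W ∨ slLT V W

/-- `σ` is weakly dominant: `W(σ') ≤_sl W(σ)` for every one-pass strategy `σ'`. -/
def CFGame.WeaklyDominant [LinearOrder A] (G : CFGame A) (σ : JStrat A) : Prop :=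
  ∀ σ' : JStrat A, slLE (G.W σ') (G.W σ)

/-- The bounded depth property. -/
def CFGame.BoundedDepthProperty (G : CFGame A) : Prop :=
  ∃ B : ℕ → ℕ, ∀ σ : JStrat A, ∀ k : ℕ, ∃ σk : JStrat A,
    ∀ w ∈ G.W σ, w.length ≤ k →
      G.WinsOn σk w ∧
      ∀ τ : RStrat A, G.RValid τ → ∀ n : ℕ, (G.play σk τ w n).2.2 ≤ B w.length

/-- Prefix-freeness of all replacement languages. -/
def CFGame.PrefixFree (G : CFGame A) : Prop :=
  ∀ (a : A) (u v : List A), G.R a u → G.R a v → u <+: v → u = v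

/-- Non-recursiveness: no function symbol can be derived from itself. -/
def CFGame.NonRecursive (G : CFGame A) : Prop :=
  ¬ ∃ (n : ℕ) (f : ℕ → A), 1 ≤ n ∧ f 0 = f n ∧ (∀ i ≤ n, G.Fn (f i)) ∧
    ∀ k < n, ∃ v : List A, G.R (f k) v ∧ f (k + 1) ∈ v

/-- `σ` is almost undominated: only finitely many words are lost by `σ` but won
by some strategy dominating `σ`. -/
def CFGame.AlmostUndominated (G : CFGame A) (σ : JStrat A) : Prop :=
  Set.Finite {w : List A | ¬ G.WinsOn σ w ∧
    ∃ σ' : JStrat A, G.W σ ⊆ G.W σ' ∧ G.WinsOn σ' w}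

/-- Convergence of a sequence of one-pass strategies. -/
def Converges (G : CFGame A) (σs : ℕ → JStrat A) (σ : JStrat A) : Prop :=
  ∀ n : ℕ, ∃ k0 : ℕ, ∀ k ≥ k0, ∀ α : List (HSym A), α.length ≤ n →
    ∀ a : A, G.Fn a → σ α a = σs k α a

/-- The one-pass strategy defined by a DFA `M` over Σ̂ (a strategy automaton):
play `Call` on `(α,a)` iff `M` accepts `α·a`. -/
noncomputable def autoStrat {S : Type} (M : DFA (HSym A) S) : JStrat A :=
  fun α a =>
    letI := Classical.propDecidable (M.eval (α ++ [Sum.inl a]) ∈ M.accept)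
    if M.eval (α ++ [Sum.inl a]) ∈ M.accept then JMove.call else JMove.read

/-- `States(q; w, σ)`: the `T`-states `δ*(q, ♮α)` over final history strings `α`
of plays of `σ` on `w`. -/
def CFGame.StatesOf (G : CFGame A) (σ : JStrat A) (q : G.Q) (w : List A) : Set G.Q :=
  {q' | ∃ τ : RStrat A, G.RValid τ ∧ ∃ n : ℕ,
    (G.play σ τ w n).2.1 = [] ∧ G.T.evalFrom q (flat (G.play σ τ w n).1) = q'}

/-- `(p, a, S)` is an effect triple of `σ`. -/
def CFGame.IsEffectTriple (G : CFGame A) (σ : JStrat A) (t : G.Q × A × Set G.Q) : Prop :=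
  G.StatesOf σ t.1 [t.2.1] ⊆ t.2.2

/-- An effect triple is trivial if `δ(p,a) ∈ S`. -/
def CFGame.TrivialTriple (G : CFGame A) (t : G.Q × A × Set G.Q) : Prop :=
  G.T.step t.1 t.2.1 ∈ t.2.2

/-- The substrategy `σ^α`. -/
def subStrat (σ : JStrat A) (α : List (HSym A)) : JStrat A :=
  fun β a => σ (α ++ β) a

/-- The effect set `E(σ)`: all effect triples of all substrategies of `σ`. -/
def CFGame.EffectSet (G : CFGame A) (σ : JStrat A) : Set (G.Q × A × Set G.Q) :=
  {t | ∃ α : List (HSym A), G.IsEffectTriple (subStrat σ α) t}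

/-- The transition relation of the NFA `N_E` associated with a set `E` of effect
triples (state set `P(Q)`, initial state `{s}`, accepting states the subsets of `F`). -/
def CFGame.NEStep (G : CFGame A) (E : Set (G.Q × A × Set G.Q))
    (S : Set G.Q) (a : A) (S' : Set G.Q) : Prop :=
  ∀ p ∈ S, ∃ S'' : Set G.Q, S'' ⊆ S' ∧ (p, a, S'') ∈ E

/-- A strategy for the online word problem `OnlineNFA(N_E)`. -/
def CFGame.NEOnlineStrat (G : CFGame A) (E : Set (G.Q × A × Set G.Q))
    (ρ : List A → Set G.Q) : Prop :=
  ρ [] = {G.T.start} ∧ ∀ (w : List A) (a : A), G.NEStep E (ρ w) a (ρ (w ++ [a]))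

/-- The winning set of a strategy for `OnlineNFA(N_E)`. -/
def CFGame.NEWins (G : CFGame A) (ρ : List A → Set G.Q) : Set (List A) :=
  {w | ρ w ⊆ G.T.accept}

/-- A strategy automaton `M` is `(p,a,St)`-inducing. -/
def CFGame.Inducing (G : CFGame A) {S : Type} (M : DFA (HSym A) S)
    (p : G.Q) (a : A) (St : Set G.Q) : Prop :=
  G.Terminating (autoStrat M) ∧ G.Fn a ∧
  (∀ u : List A, G.R a u → G.StatesOf (autoStrat M) p u ⊆ St) ∧
  ∃ QA : G.Q → Set S,
    (∀ q ∈ St, ∀ q' ∈ St, q ≠ q' → Disjoint (QA q) (QA q')) ∧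
    ∀ u : List A, G.R a u → ∀ τ : RStrat A, G.RValid τ → ∀ n : ℕ,
      (G.play (autoStrat M) τ u n).2.1 = [] →
      ((∀ q ∈ St,
          (M.eval (G.play (autoStrat M) τ u n).1 ∈ QA q ↔
            G.T.evalFrom p (flat (G.play (autoStrat M) τ u n).1) = q)) ∧
        ∀ β : List (HSym A), β <+: (G.play (autoStrat M) τ u n).1 →
          β ≠ (G.play (autoStrat M) τ u n).1 → ∀ r ∈ St, M.eval β ∉ QA r)

/-!
A symbol produced at call-nesting level `k` ends a derivation chain `a₀ → a₁ → ⋯ → a_k`; in a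
non-recursive game such a chain cannot repeat a symbol, so `k < |Σ|`. Hence every play has depth
at most `|Σ|`, which is the bounded depth property with `σ_k = σ`, and every play is finite: a step
trades one symbol of level `k` for symbols of level `k + 1`, so the vector of level counts decreases
lexicographically.

Let `D` be the greedy set of words: `w ∈ D` iff some strategy wins on `w` and on all
shortlex-smaller words of `D`. Some strategy `σ_k` wins on all words of `D` of length at most `k`,
and the limit of the `σ_k` along a nonprincipal ultrafilter wins on all of `D`: a play against a
fixed Romeo strategy is finite, so it consults only finitely many decisions, on which the limit
agrees with `σ_k` for ultrafilter-many `k`. Its winning set is exactly `D`, which is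
shortlex-greatest among winning sets.
-/

section Shortlex

variable [LinearOrder A]

theorem shortLex_eq_shortlex : (shortLex : List A → List A → Prop) = List.Shortlex (· < ·) := by
  funext v w
  exact propext List.shortlex_def.symm

theorem shortLex_wf [Finite A] : WellFounded (shortLex : List A → List A → Prop) := by
  rw [shortLex_eq_shortlex]
  exact List.Shortlex.wf wellFounded_lt

theorem shortLex_trichotomous (v w : List A) : shortLex v w ∨ v = w ∨ shortLex w v := by
  rcases lt_trichotomy v.length w.length with h | h | h
  · exact Or.inl (Or.inl h)
  · rcases trichotomous_of (List.Lex ((· < ·) : A → A → Prop)) v w with h' | h' | h'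
    · exact Or.inl (Or.inr ⟨h, h'⟩)
    · exact Or.inr (Or.inl h')
    · exact Or.inr (Or.inr (Or.inr ⟨h.symm, h'⟩))
  · exact Or.inr (Or.inr (Or.inl h))

end Shortlex

def levelCount (rem : List (A × ℕ)) (j : ℕ) : ℕ :=
  rem.countP (fun s => s.2 = j)

theorem toLex_levelCount_lt {C k : ℕ} (hk : k < C) (a : A) (u : List A) (v : List (A × ℕ)) :
    toLex (fun j : Fin C => levelCount (u.map (fun b => (b, k + 1)) ++ v) j) <
      toLex (fun j : Fin C => levelCount ((a, k) :: v) j) := by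
  have hcount : ∀ j ≤ k, levelCount (u.map (fun b => (b, k + 1)) ++ v) j +
      (if k = j then 1 else 0) = levelCount ((a, k) :: v) j := fun j hj => by
    simp only [levelCount, List.countP_append, List.countP_map, List.countP_cons]
    rw [List.countP_eq_zero.mpr fun b _ => by simp; omega]
    simp
  refine ⟨⟨k, hk⟩, fun j (hj : (j : ℕ) < k) => ?_, ?_⟩
  · have h := hcount j hj.le
    rw [if_neg hj.ne'] at h
    exact h
  · have h := hcount k le_rfl
    rw [if_pos rfl] at h
    change levelCount _ k < levelCount _ k
    omega

open scoped Classical in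
noncomputable def ultraLimit (U : Ultrafilter ℕ) (σs : ℕ → JStrat A) : JStrat A :=
  fun α a => if ∀ᶠ k in U, σs k α a = JMove.call then JMove.call else JMove.read

theorem eventually_eq_ultraLimit (U : Ultrafilter ℕ) (σs : ℕ → JStrat A) (α : List (HSym A))
    (a : A) : ∀ᶠ k in U, σs k α a = ultraLimit U σs α a := by
  unfold ultraLimit
  split_ifs with h
  · exact h
  · refine (Ultrafilter.eventually_not.mpr h).mono fun k hk => ?_
    cases hσ : σs k α a
    · exact absurd hσ hk
    · rfl

namespace CFGame

variable {G : CFGame A}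

def DerivableIn (G : CFGame A) (a : A) (k : ℕ) : Prop :=
  ∃ f : ℕ → A, f k = a ∧ ∀ i < k, ∃ v, G.R (f i) v ∧ f (i + 1) ∈ v

theorem DerivableIn.succ {a b : A} {k : ℕ} {u : List A} (h : G.DerivableIn a k) (hu : G.R a u)
    (hb : b ∈ u) : G.DerivableIn b (k + 1) := by
  obtain ⟨f, rfl, hf⟩ := h
  refine ⟨Function.update f (k + 1) b, by simp, fun i hi => ?_⟩
  rw [Function.update_of_ne (by omega)]
  rcases Nat.lt_succ_iff_lt_or_eq.mp hi with hi | rfl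
  · rw [Function.update_of_ne (by omega)]
    exact hf i hi
  · rw [Function.update_self]
    exact ⟨u, hu, hb⟩

theorem NonRecursive.injOn_of_chain (hnr : G.NonRecursive) {f : ℕ → A} {m : ℕ}
    (hf : ∀ i < m, ∃ v, G.R (f i) v ∧ f (i + 1) ∈ v) : Set.InjOn f (Set.Iic m) := by
  suffices h : ∀ i j, i < j → j ≤ m → f i ≠ f j by
    intro i hi j hj hij
    by_contra hne
    rcases Nat.lt_or_gt_of_ne hne with hlt | hlt
    · exact h i j hlt hj hij
    · exact h j i hlt hi hij.symm
  intro i j hij hjm heq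
  have hji : i + (j - i) = j := Nat.add_sub_cancel' hij.le
  refine hnr ⟨j - i, fun t => f (i + t), by omega, by simpa [hji] using heq, fun t ht => ?_,
    fun t ht => by simpa [Nat.add_assoc] using hf (i + t) (by omega)⟩
  rcases ht.lt_or_eq with ht | rfl
  · obtain ⟨v, hv, -⟩ := hf (i + t) (by omega)
    exact ⟨v, hv⟩
  · obtain ⟨v, hv, -⟩ := hf i (by omega)
    exact ⟨v, by simpa [hji, ← heq] using hv⟩

theorem NonRecursive.lt_card_of_derivableIn [Fintype A] (hnr : G.NonRecursive) {a : A} {k : ℕ}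
    (h : G.DerivableIn a k) : k < Fintype.card A := by
  obtain ⟨f, -, hf⟩ := h
  have hinj := hnr.injOn_of_chain hf
  calc k < (Finset.range (k + 1)).card := by simp
    _ ≤ (Finset.univ : Finset A).card :=
      Finset.card_le_card_of_injOn f (fun _ _ => Finset.mem_univ _) fun i hi j hj hij =>
        hinj (by simpa [Nat.lt_succ_iff] using hi) (by simpa [Nat.lt_succ_iff] using hj) hij
    _ = Fintype.card A := rfl

variable {σ σ' : JStrat A} {τ : RStrat A}

theorem step_of_remaining_eq_nil {c : Config A} (h : c.2.1 = []) : G.step σ τ c = c := by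
  obtain ⟨α, rem, d⟩ := c
  subst h
  rfl

theorem step_cons (hτ : G.RValid τ) (α : List (HSym A)) (a : A) (k : ℕ) (v : List (A × ℕ))
    (d : ℕ) : ∃ u : List A, (u = [] ∨ G.R a u) ∧
      (G.step σ τ (α, (a, k) :: v, d)).2.1 = u.map (fun b => (b, k + 1)) ++ v ∧
      (G.step σ τ (α, (a, k) :: v, d)).2.2 ≤ max d (k + 1) := by
  classical
  by_cases hcall : G.Fn a ∧ σ α a = JMove.call
  · refine ⟨τ α a, Or.inr (hτ α a hcall.1), ?_⟩
    simp [step, hcall]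
  · refine ⟨[], Or.inl rfl, ?_⟩
    simp [step, hcall]

def LevelsDerivable (G : CFGame A) (rem : List (A × ℕ)) : Prop :=
  ∀ s ∈ rem, G.DerivableIn s.1 s.2

theorem levelsDerivable_step (hτ : G.RValid τ) {c : Config A} (hc : G.LevelsDerivable c.2.1) :
    G.LevelsDerivable (G.step σ τ c).2.1 := by
  obtain ⟨α, _ | ⟨⟨a, k⟩, v⟩, d⟩ := c
  · rwa [step_of_remaining_eq_nil rfl]
  obtain ⟨u, hu, hrem, -⟩ := step_cons (σ := σ) hτ α a k v d
  rw [hrem]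
  intro s hs
  simp only [List.mem_append, List.mem_map] at hs
  rcases hs with ⟨b, hb, rfl⟩ | hs
  · rcases hu with rfl | hu
    · simp at hb
    · exact (hc _ List.mem_cons_self).succ hu hb
  · exact hc s (List.mem_cons_of_mem _ hs)

theorem depth_step_le [Fintype A] (hnr : G.NonRecursive) (hτ : G.RValid τ) {c : Config A}
    (hc : G.LevelsDerivable c.2.1) (hd : c.2.2 ≤ Fintype.card A) :
    (G.step σ τ c).2.2 ≤ Fintype.card A := by
  obtain ⟨α, _ | ⟨⟨a, k⟩, v⟩, d⟩ := c
  · rwa [step_of_remaining_eq_nil rfl]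
  obtain ⟨u, -, -, hdepth⟩ := step_cons (σ := σ) hτ α a k v d
  have hk := hnr.lt_card_of_derivableIn (hc _ List.mem_cons_self)
  exact hdepth.trans (max_le hd hk)

theorem play_succ (w : List A) (n : ℕ) :
    G.play σ τ w (n + 1) = G.step σ τ (G.play σ τ w n) :=
  Function.iterate_succ_apply' _ _ _

theorem levelsDerivable_play (hτ : G.RValid τ) (w : List A) (n : ℕ) :
    G.LevelsDerivable (G.play σ τ w n).2.1 := by
  induction n with
  | zero =>
    intro s hs
    obtain ⟨a, -, rfl⟩ := List.mem_map.mp hs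
    exact ⟨fun _ => a, rfl, by simp⟩
  | succ n ih => exact play_succ (G := G) w n ▸ levelsDerivable_step hτ ih

theorem play_depth_le [Fintype A] (hnr : G.NonRecursive) (σ : JStrat A) (hτ : G.RValid τ)
    (w : List A) (n : ℕ) : (G.play σ τ w n).2.2 ≤ Fintype.card A := by
  induction n with
  | zero => exact Nat.zero_le _
  | succ n ih =>
    exact play_succ (G := G) w n ▸ depth_step_le hnr hτ (levelsDerivable_play hτ w n) ih

theorem play_eq_play_of_remaining_eq_nil {w : List A} {m n : ℕ}
    (hm : (G.play σ τ w m).2.1 = []) (hn : (G.play σ τ w n).2.1 = []) :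
    G.play σ τ w m = G.play σ τ w n := by
  have hm' : G.play σ τ w (n + m) = G.play σ τ w m := by
    rw [play, Function.iterate_add_apply]
    exact Function.iterate_fixed (step_of_remaining_eq_nil hm) n
  have hn' : G.play σ τ w (m + n) = G.play σ τ w n := by
    rw [play, Function.iterate_add_apply]
    exact Function.iterate_fixed (step_of_remaining_eq_nil hn) m
  rw [← hm', ← hn', Nat.add_comm]

theorem exists_iterate_step_remaining_eq_nil [Fintype A] (hnr : G.NonRecursive)
    (hτ : G.RValid τ) (c : Config A) (hc : G.LevelsDerivable c.2.1) :
    ∃ n, ((G.step σ τ)^[n] c).2.1 = [] := by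
  induction c using (InvImage.wf (fun c : Config A =>
      toLex (fun j : Fin (Fintype.card A) => levelCount c.2.1 j)) wellFounded_lt).induction with
  | _ c ih =>
    obtain ⟨α, _ | ⟨⟨a, k⟩, v⟩, d⟩ := c
    · exact ⟨0, rfl⟩
    obtain ⟨u, -, hrem, -⟩ := step_cons (σ := σ) hτ α a k v d
    have hk := hnr.lt_card_of_derivableIn (hc _ List.mem_cons_self)
    have hlt := toLex_levelCount_lt hk a u v
    rw [← hrem] at hlt
    obtain ⟨n, hn⟩ := ih (G.step σ τ (α, (a, k) :: v, d)) hlt (levelsDerivable_step hτ hc)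
    exact ⟨n + 1, hn⟩

theorem play_terminates [Fintype A] (hnr : G.NonRecursive) (σ : JStrat A) (hτ : G.RValid τ)
    (w : List A) : ∃ n, (G.play σ τ w n).2.1 = [] :=
  exists_iterate_step_remaining_eq_nil hnr hτ _ (levelsDerivable_play (σ := σ) hτ w 0)

theorem step_congr {c : Config A} (h : ∀ a, σ' c.1 a = σ c.1 a) :
    G.step σ' τ c = G.step σ τ c := by
  obtain ⟨α, _ | ⟨⟨a, k⟩, v⟩, d⟩ := c
  · rfl
  · have ha : σ' α a = σ α a := h a
    dsimp only [step]
    rw [ha]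

theorem play_congr {w : List A} {n : ℕ}
    (h : ∀ i < n, ∀ a, σ' (G.play σ τ w i).1 a = σ (G.play σ τ w i).1 a) :
    G.play σ' τ w n = G.play σ τ w n := by
  induction n with
  | zero => rfl
  | succ n ih =>
    rw [play_succ, play_succ, ih fun i hi => h i (by omega), step_congr (h n (by omega))]

theorem winsOn_ultraLimit [Fintype A] (hnr : G.NonRecursive)
    {U : Ultrafilter ℕ} {σs : ℕ → JStrat A} {w : List A} (h : ∀ᶠ k in U, G.WinsOn (σs k) w) :
    G.WinsOn (ultraLimit U σs) w := by
  intro τ hτ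
  obtain ⟨m, hm⟩ := G.play_terminates hnr (ultraLimit U σs) hτ w
  have hagree : ∀ᶠ k in U, ∀ i ∈ Set.Iio m, ∀ a, σs k (G.play (ultraLimit U σs) τ w i).1 a =
      ultraLimit U σs (G.play (ultraLimit U σs) τ w i).1 a :=
    (Filter.eventually_all_finite (Set.finite_Iio m)).mpr fun i _ =>
      Filter.eventually_all.mpr fun a => eventually_eq_ultraLimit U σs _ a
  obtain ⟨k, hk, hwin⟩ := (hagree.and h).exists
  obtain ⟨n, hn, hacc⟩ := hwin τ hτ
  have hplay : G.play (σs k) τ w m = G.play (ultraLimit U σs) τ w m := play_congr hk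
  refine ⟨m, hm, ?_⟩
  rwa [← hplay, play_eq_play_of_remaining_eq_nil (hplay ▸ hm) hn]

theorem boundedDepthProperty_of_nonRecursive [Fintype A] (hnr : G.NonRecursive) :
    G.BoundedDepthProperty :=
  ⟨fun _ => Fintype.card A, fun σ _ =>
    ⟨σ, fun w hw _ => ⟨hw, fun _ hτ n => G.play_depth_le hnr σ hτ w n⟩⟩⟩


section Greedy

variable [LinearOrder A]

noncomputable def greedyWinSet [Finite A] (G : CFGame A) : Set (List A) :=
  {w | shortLex_wf.fix (fun w ih => ∃ σ : JStrat A, G.WinsOn σ w ∧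
    ∀ v (h : shortLex v w), ih v h → G.WinsOn σ v) w}

theorem mem_greedyWinSet [Finite A] {w : List A} : w ∈ G.greedyWinSet ↔
    ∃ σ : JStrat A, G.WinsOn σ w ∧ ∀ v, shortLex v w → v ∈ G.greedyWinSet → G.WinsOn σ v := by
  rw [greedyWinSet, Set.mem_ofPred_eq, WellFounded.fix_eq]
  rfl

theorem exists_winsOn_greedyWinSet_of_length_le [Finite A] (k : ℕ) :
    ∃ σ : JStrat A, ∀ v ∈ G.greedyWinSet, v.length ≤ k → G.WinsOn σ v := by
  set S := {v ∈ G.greedyWinSet | v.length ≤ k}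
  rcases S.eq_empty_or_nonempty with hS | hS
  · exact ⟨fun _ _ => JMove.read, fun v hv hk => absurd (hS ▸ ⟨hv, hk⟩ : v ∈ (∅ : Set _)) id⟩
  have : IsWellFounded (List A) shortLex := ⟨shortLex_wf⟩
  -- the shortlex-greatest word of `S`, found through the ordinal rank of `shortLex`
  obtain ⟨w, ⟨hw, -⟩, hmax⟩ := S.exists_max_image (IsWellFounded.rank shortLex)
    ((List.finite_length_le A k).subset fun _ hv => hv.2) hS
  obtain ⟨σ, hσw, hσ⟩ := mem_greedyWinSet.mp hw
  refine ⟨σ, fun v hv hk => ?_⟩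
  rcases shortLex_trichotomous v w with h | rfl | h
  · exact hσ v h hv
  · exact hσw
  · exact absurd (hmax v ⟨hv, hk⟩) (IsWellFounded.rank_lt_of_rel h).not_ge

noncomputable def greedyStrat [Finite A] (G : CFGame A) : JStrat A :=
  ultraLimit (Filter.hyperfilter ℕ) fun k => (G.exists_winsOn_greedyWinSet_of_length_le k).choose

theorem W_greedyStrat [Fintype A] (hnr : G.NonRecursive) :
    G.W G.greedyStrat = G.greedyWinSet := by
  have hwins : ∀ w ∈ G.greedyWinSet, G.WinsOn G.greedyStrat w := fun w hw =>
    winsOn_ultraLimit hnr <| ((Filter.eventually_ge_atTop w.length).filter_mono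
      Nat.hyperfilter_le_atTop).mono fun k hk =>
        (G.exists_winsOn_greedyWinSet_of_length_le k).choose_spec w hw hk
  ext w
  refine ⟨fun hw => mem_greedyWinSet.mpr ⟨_, hw, fun v _ hv => hwins v hv⟩, hwins w⟩

theorem weaklyDominant_of_W_eq_greedyWinSet [Finite A] {σ : JStrat A}
    (hσ : G.W σ = G.greedyWinSet) : G.WeaklyDominant σ := by
  intro σ'
  by_cases he : G.W σ' = G.W σ
  · exact Or.inl he
  right
  rw [hσ] at he ⊢
  set S := {v | ¬(v ∈ G.W σ' ↔ v ∈ G.greedyWinSet)}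
  have hS : S.Nonempty := by
    by_contra hS
    exact he (Set.ext fun v => not_not.mp fun hv => hS ⟨v, hv⟩)
  set w := shortLex_wf.min S hS
  have hw : w ∈ S := shortLex_wf.min_mem S hS
  have hbelow : ∀ v, shortLex v w → (v ∈ G.W σ' ↔ v ∈ G.greedyWinSet) := fun v hv =>
    not_not.mp fun hvS => shortLex_wf.not_lt_min S hvS hv
  have hwσ' : w ∉ G.W σ' := fun hwσ' => hw <| iff_of_true hwσ' <|
    mem_greedyWinSet.mpr ⟨σ', hwσ', fun v hv hvD => (hbelow v hv).mpr hvD⟩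
  have hwD : w ∈ G.greedyWinSet := by
    by_contra hwD
    exact hw (iff_of_false hwσ' hwD)
  exact ⟨w, hwD, hwσ', hbelow⟩

theorem WeaklyDominant.undominated {σ : JStrat A} (h : G.WeaklyDominant σ) :
    G.Undominated σ := by
  rintro ⟨σ', hσ'⟩
  rcases h σ' with he | ⟨w, hwσ, hwσ', -⟩
  · exact hσ'.ne he.symm
  · exact hwσ' (hσ'.subset hwσ)

end Greedy

end CFGame

theorem statement19 {A : Type} [Fintype A] [LinearOrder A] (G : CFGame A)
    (hnr : G.NonRecursive) :
    G.BoundedDepthProperty ∧ (∃ σ : JStrat A, G.WeaklyDominant σ) ∧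
      (∃ σ : JStrat A, G.Undominated σ) := by
  have hdom := G.weaklyDominant_of_W_eq_greedyWinSet (G.W_greedyStrat hnr)
  exact ⟨G.boundedDepthProperty_of_nonRecursive hnr, ⟨_, hdom⟩, ⟨_, hdom.undominated⟩⟩

end CFG
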